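/- Let a, b, c ∈ Aut(X*) be defined by the wreath recursion a = σ(b,a), b = σ(c,b), c = (c,a). Then the monoid generated by {a, b, c} is a free monoid of rank 3: if two (possibly empty) words over the alphabet {a, b, c} represent the same tree automorphism, then they are equal as words. -/
import Mathlib


/-- `WRec s f f₀ f₁` says that the tree automorphism `f` of the binary rooted tree
`X* = List Bool` is given by the wreath recursion `f = σˢ(f₀, f₁)`:
the root permutation of `f` is the transposition `σ` when `s = true` and is trivial when
`s = false`, the section of `f` at the letter `0 = false` is `f₀`, and the section of `f`
at the letter `1 = true` is `f₁`. -/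
def WRec (s : Bool) (f f₀ f₁ : Equiv.Perm (List Bool)) : Prop :=
  f [] = [] ∧ (∀ w : List Bool, f (false :: w) = s :: f₀ w) ∧
    (∀ w : List Bool, f (true :: w) = (!s) :: f₁ w)

namespace Free3

/-- whether the generator flips the first letter -/
def fl : Fin 3 → Bool := ![true, true, false]

/-- section of a generator at a letter -/
def sc : Fin 3 → Bool → Fin 3 := fun x h => bif h then ![0, 1, 0] x else ![1, 2, 2] x

/-- output letter -/
def ot : Fin 3 → Bool → Bool := fun x h => bif fl x then !h else h

/-- `ZZ s u` : all entries of `u` from position `s` on are `false`. -/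
def ZZ (s : ℕ) (u : List Bool) : Prop := ∀ i, s ≤ i → u.getD i false = false

lemma repF (n i : ℕ) : (List.replicate n false).getD i false = false := by
  induction n generalizing i with
  | zero => simp
  | succ n ih => cases i <;> simp [List.replicate_succ, ih]

lemma ZZmono {s t : ℕ} {u : List Bool} (h : s ≤ t) (hz : ZZ s u) : ZZ t u :=
  fun i hi => hz i (le_trans h hi)

lemma ZZtail {s : ℕ} {α : Bool} {u : List Bool} (h : ZZ (s+1) (α :: u)) : ZZ s u :=
  fun i hi => by have := h (i+1) (by omega); simpa using this

lemma ZZcons {s : ℕ} (α : Bool) {u : List Bool} (h : ZZ s u) : ZZ (s+1) (α :: u) := by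
  intro i hi
  obtain ⟨j, rfl⟩ : ∃ j, i = j + 1 := ⟨i - 1, by omega⟩
  simpa using h j (by omega)

lemma ZZtail0 {α : Bool} {u : List Bool} (h : ZZ 0 (α :: u)) : ZZ 0 u :=
  ZZtail (ZZmono (by omega) h)

lemma ZZhead {u : List Bool} {α : Bool} (h : ZZ 0 (α :: u)) : α = false := by
  simpa using h 0 (le_refl 0)

lemma ZZnil (s : ℕ) : ZZ s [] := fun i _ => by simp

lemma ZZray (n : ℕ) : ZZ 1 (true :: List.replicate n false) := by
  intro i hi
  obtain ⟨j, rfl⟩ : ∃ j, i = j + 1 := ⟨i - 1, by omega⟩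
  simp [repF]

section

variable {G : Fin 3 → Equiv.Perm (List Bool)}

lemma lenG (hG : ∀ x h w, G x (h :: w) = ot x h :: G (sc x h) w)
    (hN : ∀ x, G x [] = []) : ∀ (u : List Bool) (x : Fin 3), (G x u).length = u.length := by
  intro u
  induction u with
  | nil => intro x; rw [hN]
  | cons α u ih => intro x; rw [hG]; simp [ih]

/-- `c` fixes all-false words. -/
lemma Gfix (hG : ∀ x h w, G x (h :: w) = ot x h :: G (sc x h) w)
    (hN : ∀ x, G x [] = []) : ∀ u : List Bool, ZZ 0 u → G 2 u = u := by
  intro u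
  induction u with
  | nil => intro _; exact hN 2
  | cons α u ih =>
    intro hz
    have hα := ZZhead hz
    subst hα
    rw [hG]
    have h1 : ot 2 false = false := by decide
    have h2 : sc 2 false = 2 := by decide
    rw [h1, h2, ih (ZZtail0 hz)]

/-- applying a generator pushes the zero tail by at most 2 -/
lemma C1 (hG : ∀ x h w, G x (h :: w) = ot x h :: G (sc x h) w)
    (hN : ∀ x, G x [] = []) :
    ∀ (s : ℕ) (x : Fin 3) (u : List Bool), ZZ s u → ZZ (s+2) (G x u) := by
  intro s
  induction s with
  | zero =>
    intro x u hz
    match u with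
    | [] => rw [hN]; exact ZZnil _
    | [α] =>
      have hα := ZZhead hz; subst hα
      rw [hG, hN]
      intro i hi
      obtain ⟨j, rfl⟩ : ∃ j, i = j + 1 := ⟨i - 1, by omega⟩
      simp
    | α :: β :: u =>
      have hα := ZZhead hz; subst hα
      have hβ := ZZhead (ZZtail0 hz); subst hβ
      rw [hG, hG]
      have hss : sc (sc x false) false = 2 := by revert x; decide
      rw [hss, Gfix hG hN u (ZZtail0 (ZZtail0 hz))]
      intro i hi
      obtain ⟨j, rfl⟩ : ∃ j, i = j + 2 := ⟨i - 2, by omega⟩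
      have := (ZZtail0 (ZZtail0 hz)) j (by omega)
      simpa using this
  | succ s ih =>
    intro x u hz
    match u with
    | [] => rw [hN]; exact ZZnil _
    | α :: u =>
      rw [hG]
      have : ZZ (s+2+1) (ot x α :: G (sc x α) u) := ZZcons _ (ih (sc x α) u (ZZtail hz))
      exact ZZmono (by omega) this

lemma lenP (hG : ∀ x h w, G x (h :: w) = ot x h :: G (sc x h) w)
    (hN : ∀ x, G x [] = []) :
    ∀ (l : List (Fin 3)) (u : List Bool), ((l.map G).prod u).length = u.length := by
  intro l
  induction l with
  | nil => intro u; simp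
  | cons x l ih =>
    intro u
    rw [List.map_cons, List.prod_cons, Equiv.Perm.mul_apply, lenG hG hN, ih]

lemma Cp (hG : ∀ x h w, G x (h :: w) = ot x h :: G (sc x h) w)
    (hN : ∀ x, G x [] = []) :
    ∀ (l : List (Fin 3)) (u : List Bool) (s : ℕ), ZZ s u →
      ZZ (s + 2 * l.length) ((l.map G).prod u) := by
  intro l
  induction l with
  | nil => intro u s hz; simpa using hz
  | cons x l ih =>
    intro u s hz
    rw [List.map_cons, List.prod_cons, Equiv.Perm.mul_apply]
    have := C1 hG hN _ x _ (ih u s hz)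
    exact ZZmono (by simp; omega) this

/-- Two distinct generators differ on words with a long enough zero tail. -/
lemma lemA (hG : ∀ x h w, G x (h :: w) = ot x h :: G (sc x h) w)
    (hN : ∀ x, G x [] = []) :
    ∀ (s : ℕ) (x y : Fin 3), x ≠ y → ∀ u v : List Bool, ZZ s u → ZZ s v →
      s + 2 ≤ u.length → s + 2 ≤ v.length → G x u ≠ G y v := by
  intro s
  induction s with
  | zero =>
    intro x y hxy u v hu hv hlu hlv heq
    match u, v with
    | α :: β :: u, γ :: δ :: v =>
      have hα := ZZhead hu; subst hα
      have hβ := ZZhead (ZZtail0 hu); subst hβ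
      have hγ := ZZhead hv; subst hγ
      have hδ := ZZhead (ZZtail0 hv); subst hδ
      rw [hG, hG, hG, hG] at heq
      have h1 : ot x false = ot y false := by
        have := congrArg (fun l => l.getD 0 false) heq; simpa using this
      have h2 : ot (sc x false) false = ot (sc y false) false := by
        have := congrArg (fun l => l.getD 1 false) heq; simpa using this
      have dd : ∀ x y : Fin 3, x ≠ y →
          ¬(ot x false = ot y false ∧ ot (sc x false) false = ot (sc y false) false) := by
        decide
      exact dd x y hxy ⟨h1, h2⟩
    | [], _ => simp at hlu
    | [_], _ => simp at hlu
    | _ :: _ :: _, [] => simp at hlv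
    | _ :: _ :: _, [_] => simp at hlv
  | succ s ih =>
    intro x y hxy u v hu hv hlu hlv heq
    match u, v with
    | α :: u, β :: v =>
      rw [hG, hG] at heq
      have h1 : ot x α = ot y β := by
        have := congrArg (fun l => l.getD 0 false) heq; simpa using this
      have h2 : G (sc x α) u = G (sc y β) v := by
        have := congrArg List.tail heq; simpa using this
      have dd : ∀ (x y : Fin 3) (α β : Bool), x ≠ y → ot x α = ot y β →
          sc x α ≠ sc y β := by decide
      have hne : sc x α ≠ sc y β := dd x y α β hxy h1
      exact ih _ _ hne u v (ZZtail hu) (ZZtail hv)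
        (by simp at hlu; omega) (by simp at hlv; omega) h2
    | [], _ => simp at hlu
    | _ :: _, [] => simp at hlv

/-- An active generator never sends a word with a long zero tail to the all-false word. -/
lemma lemB (hG : ∀ x h w, G x (h :: w) = ot x h :: G (sc x h) w)
    (hN : ∀ x, G x [] = []) :
    ∀ (s : ℕ) (x : Fin 3), fl x = true → ∀ u : List Bool, ZZ s u →
      s + 1 ≤ u.length → G x u ≠ List.replicate u.length false := by
  intro s
  induction s with
  | zero =>
    intro x hx u hu hlu heq
    match u with
    | α :: u =>
      have hα := ZZhead hu; subst hα
      rw [hG] at heq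
      have h1 : ot x false = false := by
        have := congrArg (fun l => l.getD 0 false) heq
        simpa [List.replicate_succ] using this
      have dd : ∀ x : Fin 3, fl x = true → ot x false = true := by decide
      rw [dd x hx] at h1
      exact Bool.noConfusion h1
    | [] => simp at hlu
  | succ s ih =>
    intro x hx u hu hlu heq
    match u with
    | α :: u =>
      rw [hG, List.length_cons, List.replicate_succ] at heq
      have h1 : ot x α = false := by
        have := congrArg (fun l => l.getD 0 false) heq; simpa using this
      have h2 : G (sc x α) u = List.replicate u.length false := by
        have := congrArg List.tail heq; simpa using this
      have dd : ∀ (x : Fin 3) (α : Bool), fl x = true → ot x α = false →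
          fl (sc x α) = true := by decide
      have h3 : fl (sc x α) = true := dd x α hx h1
      exact ih _ h3 u (ZZtail hu) (by simp at hlu; omega) h2
    | [] => simp at hlu

/-- No word in the generators maps `1 0^n` to `0^{n+1}`. -/
lemma lemD (hG : ∀ x h w, G x (h :: w) = ot x h :: G (sc x h) w)
    (hN : ∀ x, G x [] = []) :
    ∀ (l : List (Fin 3)) (n : ℕ), 2 * l.length + 1 ≤ n →
      (l.map G).prod (true :: List.replicate n false) ≠ List.replicate (n+1) false := by
  intro l
  induction l with
  | nil =>
    intro n _ heq
    rw [List.replicate_succ] at heq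
    simp at heq
  | cons x t ih =>
    intro n hn heq
    simp only [List.length_cons] at hn
    rw [List.map_cons, List.prod_cons, Equiv.Perm.mul_apply] at heq
    have hlen : ((t.map G).prod (true :: List.replicate n false)).length = n + 1 := by
      rw [lenP hG hN]; simp
    have hZ : ZZ (1 + 2 * t.length) ((t.map G).prod (true :: List.replicate n false)) :=
      Cp hG hN t _ 1 (ZZray n)
    by_cases hfx : fl x = true
    · exact lemB hG hN (1 + 2 * t.length) x hfx _ hZ (by omega)
        (by rw [hlen]; exact heq)
    · have dd : ∀ x : Fin 3, ¬ fl x = true → x = 2 := by decide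
      have hx2 : x = 2 := dd x hfx
      subst hx2
      have h2 : G 2 (List.replicate (n+1) false) = List.replicate (n+1) false :=
        Gfix hG hN _ (fun i _ => repF _ i)
      have h3 : (t.map G).prod (true :: List.replicate n false) =
          List.replicate (n+1) false := (G 2).injective (heq.trans h2.symm)
      exact ih n (by omega) h3

/-- No nonempty word fixes `1 0^n`. -/
lemma lemE (hG : ∀ x h w, G x (h :: w) = ot x h :: G (sc x h) w)
    (hN : ∀ x, G x [] = []) :
    ∀ (l : List (Fin 3)), l ≠ [] → ∀ n : ℕ, 2 * l.length + 1 ≤ n →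
      (l.map G).prod (true :: List.replicate n false) ≠ true :: List.replicate n false := by
  intro l hl n hn heq
  match l, hl with
  | y :: t, _ =>
    simp only [List.length_cons] at hn
    rw [List.map_cons, List.prod_cons, Equiv.Perm.mul_apply] at heq
    have hlen : ((t.map G).prod (true :: List.replicate n false)).length = n + 1 := by
      rw [lenP hG hN]; simp
    have hZ : ZZ (2 * t.length + 1) ((t.map G).prod (true :: List.replicate n false)) :=
      ZZmono (by omega) (Cp hG hN t _ 1 (ZZray n))
    obtain ⟨α, u', hu⟩ : ∃ α u',
        (t.map G).prod (true :: List.replicate n false) = α :: u' := by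
      rcases h' : (t.map G).prod (true :: List.replicate n false) with _ | ⟨α, u'⟩
      · rw [h'] at hlen; simp at hlen
      · exact ⟨α, u', rfl⟩
    rw [hu] at heq hZ hlen
    have hlen' : u'.length = n := by simpa using hlen
    rw [hG] at heq
    have h1 : ot y α = true := by
      have := congrArg (fun l => l.getD 0 false) heq; simpa using this
    have h2 : G (sc y α) u' = List.replicate n false := by
      have := congrArg List.tail heq; simpa using this
    have hZ' : ZZ (2 * t.length) u' := ZZtail hZ
    have hnt : 2 * t.length + 1 ≤ n := by omega
    by_cases hfz : fl (sc y α) = true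
    · exact lemB hG hN (2 * t.length) _ hfz u' hZ' (by omega)
        (by rw [hlen']; exact h2)
    · have dd : ∀ z : Fin 3, ¬ fl z = true → z = 2 := by decide
      have hz2 : sc y α = 2 := dd _ hfz
      have dd2 : ∀ (y : Fin 3) (α : Bool), sc y α = 2 → ot y α = true →
          y = 1 ∧ α = false := by decide
      obtain ⟨hy, hα⟩ := dd2 y α hz2 h1
      subst hα
      rw [hz2] at h2
      have h3 : G 2 (List.replicate n false) = List.replicate n false :=
        Gfix hG hN _ (fun i _ => repF _ i)
      have hu' : u' = List.replicate n false := (G 2).injective (h2.trans h3.symm)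
      have hfin : (t.map G).prod (true :: List.replicate n false) =
          List.replicate (n+1) false := by
        rw [hu, hu', List.replicate_succ]
      exact lemD hG hN t n hnt hfin

end

end Free3

open Free3 in
/-- Let `a, b, c` be the tree automorphisms defined by the wreath
recursion `a = σ(b,a)`, `b = σ(c,b)`, `c = (c,a)`.  Then the monoid generated by
`{a, b, c}` is free of rank 3: two words over the alphabet `{a, b, c}` representing the
same tree automorphism are equal. -/
theorem free_monoid_of_rank_three (a b c : Equiv.Perm (List Bool))
    (ha : WRec true a b a) (hb : WRec true b c b) (hc : WRec false c c a) :
    ∀ l₁ l₂ : List (Fin 3),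
      (l₁.map ![a, b, c]).prod = (l₂.map ![a, b, c]).prod → l₁ = l₂ := by
  obtain ⟨ha0, ha1, ha2⟩ := ha
  obtain ⟨hb0, hb1, hb2⟩ := hb
  obtain ⟨hc0, hc1, hc2⟩ := hc
  set G : Fin 3 → Equiv.Perm (List Bool) := ![a, b, c] with hGdef
  have hG : ∀ (x : Fin 3) (h : Bool) (w : List Bool),
      G x (h :: w) = ot x h :: G (sc x h) w := by
    intro x h w
    fin_cases x <;> cases h <;>
      simp [hGdef, ot, sc, fl, ha1, ha2, hb1, hb2, hc1, hc2]
  have hN : ∀ x : Fin 3, G x [] = [] := by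
    intro x; fin_cases x <;> simp [hGdef, ha0, hb0, hc0]
  intro l₁
  induction l₁ with
  | nil =>
    intro l₂ h
    match l₂ with
    | [] => rfl
    | y :: t =>
      exfalso
      set n := 2 * (y :: t).length + 1 with hn
      have hv := DFunLike.congr_fun h (true :: List.replicate n false)
      simp only [List.map_nil, List.prod_nil, Equiv.Perm.one_apply] at hv
      exact lemE hG hN (y :: t) (by simp) n (by omega) hv.symm
  | cons x s ih =>
    intro l₂ h
    match l₂ with
    | [] =>
      exfalso
      set n := 2 * (x :: s).length + 1 with hn
      have hv := DFunLike.congr_fun h (true :: List.replicate n false)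
      simp only [List.map_nil, List.prod_nil, Equiv.Perm.one_apply] at hv
      exact lemE hG hN (x :: s) (by simp) n (by omega) hv
    | y :: t =>
      by_cases hxy : x = y
      · subst hxy
        rw [List.map_cons, List.map_cons, List.prod_cons, List.prod_cons] at h
        have := mul_left_cancel h
        rw [ih t this]
      · exfalso
        set n := 2 * s.length + 2 * t.length + 4 with hn
        have hv := DFunLike.congr_fun h (true :: List.replicate n false)
        rw [List.map_cons, List.map_cons, List.prod_cons, List.prod_cons,
          Equiv.Perm.mul_apply, Equiv.Perm.mul_apply] at hv
        set u₁ := (s.map G).prod (true :: List.replicate n false) with hu₁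
        set u₂ := (t.map G).prod (true :: List.replicate n false) with hu₂
        have hZ₁ : ZZ (1 + 2 * s.length + 2 * t.length) u₁ :=
          ZZmono (by omega) (Cp hG hN s _ 1 (ZZray n))
        have hZ₂ : ZZ (1 + 2 * s.length + 2 * t.length) u₂ :=
          ZZmono (by omega) (Cp hG hN t _ 1 (ZZray n))
        have hl₁ : u₁.length = n + 1 := by rw [hu₁, lenP hG hN]; simp
        have hl₂ : u₂.length = n + 1 := by rw [hu₂, lenP hG hN]; simp
        exact lemA hG hN (1 + 2 * s.length + 2 * t.length) x y hxy u₁ u₂ hZ₁ hZ₂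
          (by omega) (by omega) hv
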